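/- Let T be a densely defined closed antilinear operator from H to K with closed range. Then R(T) = R(T^♯) if and only if T†T ⊂ TT† (i.e., TT† extends T†T). -/

import Mathlib

open Classical
noncomputable section

variable {H K : Type*}
  [NormedAddCommGroup H] [InnerProductSpace ℂ H] [CompleteSpace H]
  [NormedAddCommGroup K] [InnerProductSpace ℂ K] [CompleteSpace K]

/-- `D` is a complex linear subspace of `H` (as a set). -/
def IsLinSubspace (D : Set H) : Prop :=
  (0 : H) ∈ D ∧ ∀ (a : ℂ) (x y : H), x ∈ D → y ∈ D → a • x + y ∈ D

/-- `f` is (complex) linear on `D`. -/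
def LinearOn (D : Set H) (f : H → K) : Prop :=
  ∀ (a : ℂ) (x y : H), x ∈ D → y ∈ D → f (a • x + y) = a • f x + f y

/-- `f` is antilinear (conjugate-linear) on `D`. -/
def AntilinearOn (D : Set H) (f : H → K) : Prop :=
  ∀ (a : ℂ) (x y : H), x ∈ D → y ∈ D → f (a • x + y) = (starRingEnd ℂ a) • f x + f y

/-- The operator with domain `D` given by `f` has closed graph, i.e. is a closed operator. -/
def HasClosedGraph (D : Set H) (f : H → K) : Prop :=
  IsClosed {p : H × K | p.1 ∈ D ∧ f p.1 = p.2}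

/-- `C` is a conjugation on `K`: an isometric antilinear involution. -/
def IsConjugation (C : K → K) : Prop :=
  (∀ (a : ℂ) (x y : K), C (a • x + y) = (starRingEnd ℂ a) • C x + C y) ∧
  (∀ x, C (C x) = x) ∧
  ∀ x y : K, (inner ℂ (C x) (C y) : ℂ) = inner ℂ y x

/-- Domain of the (linear) Hilbert space adjoint of the operator `(D, f)`. -/
def adjDom (D : Set H) (f : H → K) : Set K :=
  {y | ∃ u : H, ∀ x ∈ D, (inner ℂ (f x) y : ℂ) = inner ℂ x u}

/-- The (linear) Hilbert space adjoint of the operator `(D, f)`; `0` outside its domain.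
For a densely defined operator the vector `u` below is unique. -/
def adjFun (D : Set H) (f : H → K) : K → H := fun y =>
  if h : ∃ u : H, ∀ x ∈ D, (inner ℂ (f x) y : ℂ) = inner ℂ x u then h.choose else 0

/-- Domain of the antilinear adjoint `T^♯` of the operator `(D, f)`:
`y ∈ D(T^♯)` iff there is `u` with `conj ⟪f x, y⟫ = ⟪x, u⟫` for all `x ∈ D`. -/
def sharpDom (D : Set H) (f : H → K) : Set K :=
  {y | ∃ u : H, ∀ x ∈ D, (starRingEnd ℂ) (inner ℂ (f x) y : ℂ) = inner ℂ x u}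

/-- The antilinear adjoint `T^♯`; `0` outside its domain.
For a densely defined operator the vector `u` below is unique. -/
def sharpFun (D : Set H) (f : H → K) : K → H := fun y =>
  if h : ∃ u : H, ∀ x ∈ D, (starRingEnd ℂ) (inner ℂ (f x) y : ℂ) = inner ℂ x u then h.choose
  else 0

/-- Orthogonal complement (as a set) of a set. -/
def perpSet (S : Set K) : Set K := {y | ∀ z ∈ S, (inner ℂ z y : ℂ) = 0}


/-- The orthogonal complement of the kernel `N(T)` of the operator `T = (D, f)`. -/
def nullPerp (D : Set H) (f : H → K) : Set H := perpSet {x : H | x ∈ D ∧ f x = 0}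

/-- Domain `R(T) ⊕ R(T)^⊥` of the Moore–Penrose inverse of `T = (D, f)`. -/
def pinvDom (D : Set H) (f : H → K) : Set K :=
  {y : K | ∃ r ∈ f '' D, ∃ p ∈ perpSet (f '' D), y = r + p}

/-- The Moore–Penrose inverse of `T = (D, f)`: for `y = y₁ + y₂` with `y₁ ∈ R(T)` and
`y₂ ∈ R(T)^⊥`, it is the unique `x ∈ N(T)^⊥ ∩ D(T)` with `f x = y₁` (and it is `0` outside
`R(T) ⊕ R(T)^⊥`; such an `x` is unique for a closed operator). -/
def pinvFun (D : Set H) (f : H → K) : K → H := fun y =>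
  if h : ∃ x, x ∈ D ∧ x ∈ nullPerp D f ∧ f x - y ∈ perpSet (f '' D) then h.choose else 0

/-! When the range is closed, `T† y` is the unique `x ∈ D ∩ N(T)ᗮ` with `T x = P_{R(T)} y`, so
`TT† = P_{R(T)}` everywhere and `T†T = P_{N(T)ᗮ}` on `D`. The inclusion `T†T ⊂ TT†` thus says that
these two orthogonal projections agree on the dense set `D`, i.e. `R(T) = N(T)ᗮ`.
On the other side, `R(T^♯) = N(T)ᗮ`: by the closed graph theorem `T†` is bounded, so for
`u ∈ N(T)ᗮ` the functional `y ↦ ⟪T† y, u⟫` is `⟪v, ·⟫` for some `v`, and then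
`conj ⟪T x, v⟫ = ⟪T†T x, u⟫ = ⟪x, u⟫` for `x ∈ D`, i.e. `T^♯ v = u`. -/

theorem Submodule.eq_iff_forall_starProjection_eq_of_dense {𝕜 E : Type*} [RCLike 𝕜]
    [NormedAddCommGroup E] [InnerProductSpace 𝕜 E] {S : Set E} (hS : Dense S)
    (U V : Submodule 𝕜 E) [U.HasOrthogonalProjection] [V.HasOrthogonalProjection] :
    U = V ↔ ∀ x ∈ S, U.starProjection x = V.starProjection x := by
  refine ⟨by rintro rfl _ _; rfl, fun h => ?_⟩
  have hUV : U.starProjection = V.starProjection :=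
    DFunLike.coe_injective (U.starProjection.continuous.ext_on hS V.starProjection.continuous h)
  rw [← U.range_starProjection, ← V.range_starProjection, hUV]

variable {E F : Type*} [NormedAddCommGroup E] [InnerProductSpace ℂ E] [NormedAddCommGroup F]
  [InnerProductSpace ℂ F] {D : Set E} {f : E → F}

def IsLinSubspace.toSubmodule (hsub : IsLinSubspace D) : Submodule ℂ E where
  carrier := D
  zero_mem' := hsub.1
  add_mem' hx hy := by simpa using hsub.2 1 _ _ hx hy
  smul_mem' a _ hx := by simpa using hsub.2 a _ 0 hx hsub.1

theorem sharpFun_spec {y : F} (hy : y ∈ sharpDom D f) :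
    ∀ x ∈ D, starRingEnd ℂ (inner ℂ (f x) y) = inner ℂ x (sharpFun D f y) := by
  have hex : ∃ u : E, ∀ x ∈ D, starRingEnd ℂ (inner ℂ (f x) y) = inner ℂ x u := hy
  rw [sharpFun, dif_pos hex]
  exact hex.choose_spec

theorem sharpFun_eq (hdense : Dense D) {y : F} {u : E}
    (hu : ∀ x ∈ D, starRingEnd ℂ (inner ℂ (f x) y) = inner ℂ x u) : sharpFun D f y = u :=
  hdense.eq_of_inner_right ℂ fun x hx => (sharpFun_spec ⟨u, hu⟩ x hx).symm.trans (hu x hx)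

namespace AntilinearOn

theorem map_zero (hanti : AntilinearOn D f) (hsub : IsLinSubspace D) : f 0 = 0 := by
  simpa using hanti 1 0 0 hsub.1 hsub.1

theorem map_add (hanti : AntilinearOn D f) {x y : E} (hx : x ∈ D) (hy : y ∈ D) :
    f (x + y) = f x + f y := by
  simpa using hanti 1 x y hx hy

theorem map_smul (hanti : AntilinearOn D f) (hsub : IsLinSubspace D) (a : ℂ) {x : E}
    (hx : x ∈ D) : f (a • x) = starRingEnd ℂ a • f x := by
  simpa [hanti.map_zero hsub] using hanti a x 0 hx hsub.1

theorem map_sub (hanti : AntilinearOn D f) {x y : E} (hx : x ∈ D) (hy : y ∈ D) :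
    f (x - y) = f x - f y := by
  simpa only [neg_smul, one_smul, map_neg, map_one, ← sub_eq_neg_add] using hanti (-1) y x hy hx

def ker (hanti : AntilinearOn D f) (hsub : IsLinSubspace D) : Submodule ℂ E where
  carrier := {x | x ∈ D ∧ f x = 0}
  zero_mem' := ⟨hsub.1, hanti.map_zero hsub⟩
  add_mem' hx hy := ⟨hsub.toSubmodule.add_mem hx.1 hy.1, by
    rw [hanti.map_add hx.1 hy.1, hx.2, hy.2, add_zero]⟩
  smul_mem' a _ hx := ⟨hsub.toSubmodule.smul_mem a hx.1, by
    rw [hanti.map_smul hsub a hx.1, hx.2, smul_zero]⟩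

def range (hanti : AntilinearOn D f) (hsub : IsLinSubspace D) : Submodule ℂ F where
  carrier := f '' D
  zero_mem' := ⟨0, hsub.1, hanti.map_zero hsub⟩
  add_mem' := by
    rintro _ _ ⟨x, hx, rfl⟩ ⟨y, hy, rfl⟩
    exact ⟨x + y, hsub.toSubmodule.add_mem hx hy, hanti.map_add hx hy⟩
  smul_mem' := by
    rintro a _ ⟨x, hx, rfl⟩
    refine ⟨starRingEnd ℂ a • x, hsub.toSubmodule.smul_mem _ hx, ?_⟩
    rw [hanti.map_smul hsub _ hx, Complex.conj_conj]

theorem nullPerp_eq (hanti : AntilinearOn D f) (hsub : IsLinSubspace D) :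
    nullPerp D f = ((hanti.ker hsub)ᗮ : Set E) :=
  rfl

theorem perpSet_image_eq (hanti : AntilinearOn D f) (hsub : IsLinSubspace D) :
    perpSet (f '' D) = ((hanti.range hsub)ᗮ : Set F) :=
  rfl

theorem coe_range (hanti : AntilinearOn D f) (hsub : IsLinSubspace D) :
    (hanti.range hsub : Set F) = f '' D :=
  rfl

theorem isClosed_ker (hanti : AntilinearOn D f) (hsub : IsLinSubspace D)
    (hclosed : HasClosedGraph D f) : IsClosed (hanti.ker hsub : Set E) :=
  hclosed.preimage (continuous_id.prodMk continuous_const : Continuous fun x : E => (x, (0 : F)))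

theorem eq_of_mem_orthogonal_ker (hanti : AntilinearOn D f) (hsub : IsLinSubspace D)
    {x x' : E} (hx : x ∈ D) (hx' : x' ∈ D) (hxN : x ∈ (hanti.ker hsub)ᗮ)
    (hx'N : x' ∈ (hanti.ker hsub)ᗮ) (hf : f x = f x') : x = x' := by
  have hker : x - x' ∈ hanti.ker hsub :=
    ⟨hsub.toSubmodule.sub_mem hx hx', by rw [hanti.map_sub hx hx', hf, sub_self]⟩
  exact sub_eq_zero.mp <|
    Submodule.disjoint_def.mp (hanti.ker hsub).orthogonal_disjoint _ hker (sub_mem hxN hx'N)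

theorem starProjection_orthogonal_ker_mem (hanti : AntilinearOn D f) (hsub : IsLinSubspace D)
    [(hanti.ker hsub).HasOrthogonalProjection]
    {x : E} (hx : x ∈ D) : (hanti.ker hsub)ᗮ.starProjection x ∈ D := by
  rw [Submodule.starProjection_orthogonal_val]
  exact hsub.toSubmodule.sub_mem hx ((hanti.ker hsub).starProjection_apply_mem x).1

theorem map_starProjection_orthogonal_ker (hanti : AntilinearOn D f) (hsub : IsLinSubspace D)
    [(hanti.ker hsub).HasOrthogonalProjection]
    {x : E} (hx : x ∈ D) : f ((hanti.ker hsub)ᗮ.starProjection x) = f x := by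
  obtain ⟨hpD, hp0⟩ : _ ∈ D ∧ _ = (0 : F) := (hanti.ker hsub).starProjection_apply_mem x
  rw [Submodule.starProjection_orthogonal_val, hanti.map_sub hx hpD, hp0, sub_zero]

theorem sub_mem_perpSet_image_iff (hanti : AntilinearOn D f) (hsub : IsLinSubspace D)
    [(hanti.range hsub).HasOrthogonalProjection] {x : E}
    (hx : x ∈ D) (y : F) :
    f x - y ∈ perpSet (f '' D) ↔ f x = (hanti.range hsub).starProjection y := by
  refine ⟨fun h => ?_, fun h => ?_⟩
  · refine (Submodule.eq_starProjection_of_mem_orthogonal (K := hanti.range hsub)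
      (show f x ∈ f '' D from ⟨x, hx, rfl⟩) ?_).symm
    simpa using neg_mem (show f x - y ∈ (hanti.range hsub)ᗮ from h)
  · rw [perpSet_image_eq hanti hsub, h]
    simpa using neg_mem (Submodule.sub_starProjection_mem_orthogonal (K := hanti.range hsub) y)

theorem pinvFun_eq_iff (hanti : AntilinearOn D f) (hsub : IsLinSubspace D)
    [(hanti.ker hsub).HasOrthogonalProjection] [(hanti.range hsub).HasOrthogonalProjection]
    {x : E} {y : F} :
    pinvFun D f y = x ↔
      x ∈ D ∧ x ∈ (hanti.ker hsub)ᗮ ∧ f x = (hanti.range hsub).starProjection y := by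
  have hspec : ∀ z, (z ∈ D ∧ z ∈ nullPerp D f ∧ f z - y ∈ perpSet (f '' D)) ↔
      z ∈ D ∧ z ∈ (hanti.ker hsub)ᗮ ∧ f z = (hanti.range hsub).starProjection y :=
    fun z => and_congr_right fun hz => and_congr_right fun _ =>
      sub_mem_perpSet_image_iff hanti hsub hz y
  obtain ⟨z, hzD, hz⟩ : _ ∈ f '' D := (hanti.range hsub).starProjection_apply_mem y
  have hex : ∃ x, x ∈ D ∧ x ∈ nullPerp D f ∧ f x - y ∈ perpSet (f '' D) :=
    ⟨_, (hspec _).mpr ⟨starProjection_orthogonal_ker_mem hanti hsub hzD,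
      Submodule.starProjection_apply_mem _ z,
      (map_starProjection_orthogonal_ker hanti hsub hzD).trans hz⟩⟩
  obtain ⟨hcD, hcN, hcf⟩ := (hspec _).mp hex.choose_spec
  rw [pinvFun, dif_pos hex]
  refine ⟨by rintro rfl; exact ⟨hcD, hcN, hcf⟩, fun ⟨hxD, hxN, hxf⟩ => ?_⟩
  exact eq_of_mem_orthogonal_ker hanti hsub hcD hxD hcN hxN (hcf.trans hxf.symm)

theorem pinvFun_mem (hanti : AntilinearOn D f) (hsub : IsLinSubspace D)
    [(hanti.ker hsub).HasOrthogonalProjection] [(hanti.range hsub).HasOrthogonalProjection]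
    (y : F) : pinvFun D f y ∈ D :=
  ((pinvFun_eq_iff hanti hsub).mp rfl).1

theorem pinvFun_mem_orthogonal_ker (hanti : AntilinearOn D f) (hsub : IsLinSubspace D)
    [(hanti.ker hsub).HasOrthogonalProjection] [(hanti.range hsub).HasOrthogonalProjection]
    (y : F) : pinvFun D f y ∈ (hanti.ker hsub)ᗮ :=
  ((pinvFun_eq_iff hanti hsub).mp rfl).2.1

theorem map_pinvFun (hanti : AntilinearOn D f) (hsub : IsLinSubspace D)
    [(hanti.ker hsub).HasOrthogonalProjection] [(hanti.range hsub).HasOrthogonalProjection]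
    (y : F) : f (pinvFun D f y) = (hanti.range hsub).starProjection y :=
  ((pinvFun_eq_iff hanti hsub).mp rfl).2.2

theorem pinvFun_map (hanti : AntilinearOn D f) (hsub : IsLinSubspace D)
    [(hanti.ker hsub).HasOrthogonalProjection] [(hanti.range hsub).HasOrthogonalProjection]
    {x : E} (hx : x ∈ D) :
    pinvFun D f (f x) = (hanti.ker hsub)ᗮ.starProjection x := by
  refine (pinvFun_eq_iff hanti hsub).mpr ⟨starProjection_orthogonal_ker_mem hanti hsub hx,
    Submodule.starProjection_apply_mem _ x, ?_⟩
  rw [map_starProjection_orthogonal_ker hanti hsub hx,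
    Submodule.starProjection_eq_self_iff.mpr (show f x ∈ f '' D from ⟨x, hx, rfl⟩)]

theorem mem_pinvDom (hanti : AntilinearOn D f) (hsub : IsLinSubspace D)
    [(hanti.range hsub).HasOrthogonalProjection] (y : F) : y ∈ pinvDom D f :=
  ⟨_, Submodule.starProjection_apply_mem (hanti.range hsub) y, _,
    Submodule.sub_starProjection_mem_orthogonal (K := hanti.range hsub) y,
    (add_sub_cancel _ _).symm⟩

theorem pinvFun_add (hanti : AntilinearOn D f) (hsub : IsLinSubspace D)
    [(hanti.ker hsub).HasOrthogonalProjection] [(hanti.range hsub).HasOrthogonalProjection]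
    (y y' : F) : pinvFun D f (y + y') = pinvFun D f y + pinvFun D f y' := by
  refine (pinvFun_eq_iff hanti hsub).mpr ⟨hsub.toSubmodule.add_mem (pinvFun_mem hanti hsub y)
    (pinvFun_mem hanti hsub y'), add_mem (pinvFun_mem_orthogonal_ker hanti hsub y)
    (pinvFun_mem_orthogonal_ker hanti hsub y'), ?_⟩
  rw [hanti.map_add (pinvFun_mem hanti hsub y) (pinvFun_mem hanti hsub y'),
    map_pinvFun hanti hsub, map_pinvFun hanti hsub, _root_.map_add]

theorem pinvFun_smul (hanti : AntilinearOn D f) (hsub : IsLinSubspace D)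
    [(hanti.ker hsub).HasOrthogonalProjection] [(hanti.range hsub).HasOrthogonalProjection]
    (a : ℂ) (y : F) : pinvFun D f (a • y) = starRingEnd ℂ a • pinvFun D f y := by
  refine (pinvFun_eq_iff hanti hsub).mpr
    ⟨hsub.toSubmodule.smul_mem _ (pinvFun_mem hanti hsub y),
    Submodule.smul_mem _ _ (pinvFun_mem_orthogonal_ker hanti hsub y), ?_⟩
  rw [hanti.map_smul hsub _ (pinvFun_mem hanti hsub y), map_pinvFun hanti hsub,
    _root_.map_smul, Complex.conj_conj]

theorem continuous_pinvFun [CompleteSpace E] [CompleteSpace F] (hanti : AntilinearOn D f)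
    (hsub : IsLinSubspace D) [(hanti.ker hsub).HasOrthogonalProjection]
    [(hanti.range hsub).HasOrthogonalProjection] (hclosed : HasClosedGraph D f) :
    Continuous (pinvFun D f) := by
  -- `T†` is only conjugate-linear, so the closed graph theorem is applied over `ℝ`.
  let g : F →ₗ[ℝ] E :=
    { toFun := pinvFun D f
      map_add' := pinvFun_add hanti hsub
      map_smul' := fun c y => by
        rw [RingHom.id_apply, ← Complex.coe_smul, pinvFun_smul hanti hsub, Complex.conj_ofReal,
          Complex.coe_smul] }
  refine g.continuous_of_isClosed_graph ?_
  have hgraph : (g.graph : Set (F × E)) =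
      (fun p : F × E => (p.2, (hanti.range hsub).starProjection p.1)) ⁻¹'
          {q : E × F | q.1 ∈ D ∧ f q.1 = q.2} ∩
        Prod.snd ⁻¹' ((hanti.ker hsub)ᗮ : Set E) := by
    ext ⟨y, x⟩
    simp only [SetLike.mem_coe, LinearMap.mem_graph_iff, Set.mem_inter_iff, Set.mem_preimage,
      Set.mem_ofPred_eq, eq_comm (a := x)]
    exact (pinvFun_eq_iff hanti hsub).trans (by tauto)
  rw [hgraph]
  exact (hclosed.preimage (by fun_prop)).inter
    ((hanti.ker hsub).isClosed_orthogonal.preimage continuous_snd)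

theorem image_sharpDom [CompleteSpace E] [CompleteSpace F] (hanti : AntilinearOn D f)
    (hsub : IsLinSubspace D) [(hanti.ker hsub).HasOrthogonalProjection]
    [(hanti.range hsub).HasOrthogonalProjection] (hdense : Dense D) (hclosed : HasClosedGraph D f) :
    sharpFun D f '' sharpDom D f = nullPerp D f := by
  refine subset_antisymm ?_ fun u hu => ?_
  · rintro _ ⟨y, hy, rfl⟩ z ⟨hzD, hz0⟩
    rw [← sharpFun_spec hy z hzD, hz0, inner_zero_left, _root_.map_zero]
  let φ : F →L[ℂ] ℂ :=
    { toFun := fun y => inner ℂ (pinvFun D f y) u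
      map_add' := fun y y' => by rw [pinvFun_add hanti hsub, inner_add_left]
      map_smul' := fun a y => by
        rw [pinvFun_smul hanti hsub, inner_smul_left, Complex.conj_conj, smul_eq_mul,
          RingHom.id_apply]
      cont := (continuous_pinvFun hanti hsub hclosed).inner continuous_const }
  set v := (InnerProductSpace.toDual ℂ F).symm φ
  have hv : ∀ x ∈ D, starRingEnd ℂ (inner ℂ (f x) v) = inner ℂ x u := fun x hx => by
    rw [inner_conj_symm, InnerProductSpace.toDual_symm_apply]
    change inner ℂ (pinvFun D f (f x)) u = _
    rw [pinvFun_map hanti hsub hx, Submodule.inner_starProjection_left_eq_right,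
      Submodule.starProjection_eq_self_iff.mpr hu]
  exact ⟨v, ⟨u, hv⟩, sharpFun_eq hdense hv⟩

end AntilinearOn

/-- Let `T = (D, f)` be a densely defined closed antilinear operator on
`H` with closed range.  Then `R(T) = R(T^♯)` iff `T†T ⊂ TT†` (inclusion of graphs, i.e.
`TT†` extends `T†T`). -/
theorem range_eq_range_sharp_iff_pinv_commute
    (D : Set H) (f : H → H)
    (hsub : IsLinSubspace D) (hanti : AntilinearOn D f) (hdense : Dense D)
    (hclosed : HasClosedGraph D f) (hrange : IsClosed (f '' D)) :
    (f '' D = sharpFun D f '' sharpDom D f) ↔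
    (∀ x : H, x ∈ D → f x ∈ pinvDom D f →
      x ∈ pinvDom D f ∧ pinvFun D f x ∈ D ∧
        f (pinvFun D f x) = pinvFun D f (f x)) := by
  have : CompleteSpace (hanti.range hsub) := hrange.completeSpace_coe
  have : CompleteSpace (hanti.ker hsub) := (hanti.isClosed_ker hsub hclosed).completeSpace_coe
  rw [hanti.image_sharpDom hsub hdense hclosed, ← hanti.coe_range hsub, hanti.nullPerp_eq hsub,
    SetLike.coe_set_eq, Submodule.eq_iff_forall_starProjection_eq_of_dense hdense]
  refine forall₂_congr fun x hx => ?_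
  simp only [hanti.mem_pinvDom hsub, hanti.pinvFun_mem hsub, hanti.map_pinvFun hsub,
    hanti.pinvFun_map hsub hx, true_and, forall_const]
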